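/- arXiv:2412.02679 — 2 statements merged into one kernel-verified Lean document; each statement's English description precedes it below -/
import Mathlib

section
/- Let G be a finite cyclic group and c ∈ G an element of even order. Then there exists g ∈ G with 2g = c if and only if |G| / ord(c) is even. -/
/-!
In a cyclic group of order `n` with `d ∣ n`, the subgroup `d • G` has order `n / d` and is
killed by `n / d`; the kernel of multiplication by `n / d` has the same order, so the two agree.
For `d = 2` (possible since `ord c` is even and divides `n`) this says `c` is a double iff
`(n / 2) • c = 0`, i.e. iff `ord c ∣ n / 2`, i.e. iff `n / ord c` is even.
-/

theorem IsAddCyclic.range_nsmul_eq_ker_nsmul {G : Type*} [AddCommGroup G] [IsAddCyclic G]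
    [Finite G] {d : ℕ} (hd : d ∣ Nat.card G) :
    (nsmulAddMonoidHom d : G →+ G).range = (nsmulAddMonoidHom (Nat.card G / d)).ker := by
  refine AddSubgroup.eq_of_le_of_card_ge ?_ ?_
  · rintro _ ⟨g, rfl⟩
    simp only [AddMonoidHom.mem_ker, nsmulAddMonoidHom_apply, smul_smul,
      Nat.div_mul_cancel hd, card_nsmul_eq_zero']
  · rw [IsAddCyclic.card_nsmulAddMonoidHom_range, IsAddCyclic.card_nsmulAddMonoidHom_ker,
      Nat.gcd_eq_right hd, Nat.gcd_eq_right (Nat.div_dvd_of_dvd hd)]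

/-- in a finite cyclic group, an element `c` of even order is
twice some element iff `|G| / ord(c)` is even. -/
theorem stmt_11 (G : Type*) [AddCommGroup G] [Fintype G] [IsAddCyclic G] (c : G)
    (hc : Even (addOrderOf c)) :
    (∃ g : G, 2 • g = c) ↔ Even (Fintype.card G / addOrderOf c) := by
  have hc_dvd : addOrderOf c ∣ Nat.card G := addOrderOf_dvd_natCard c
  have h2 : 2 ∣ Nat.card G := hc.two_dvd.trans hc_dvd
  calc (∃ g : G, 2 • g = c)
      ↔ c ∈ (nsmulAddMonoidHom 2 : G →+ G).range := Iff.rfl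
    _ ↔ addOrderOf c ∣ Nat.card G / 2 := by
      rw [IsAddCyclic.range_nsmul_eq_ker_nsmul h2, AddMonoidHom.mem_ker,
        nsmulAddMonoidHom_apply, addOrderOf_dvd_iff_nsmul_eq_zero]
    _ ↔ Even (Fintype.card G / addOrderOf c) := by
      rw [Nat.dvd_div_iff_mul_dvd h2, mul_comm, ← Nat.dvd_div_iff_mul_dvd hc_dvd,
        Nat.card_eq_fintype_card, even_iff_two_dvd]
end

section
/- Let n ≥ 4 be even and M = n·I − J the (n−1)×(n−1) reduced Laplacian of K_n. In the finite abelian group K = ℤ^{n−1}/(M·ℤ^{n−1}), the subgroup generated by the classes of the vectors (n/2)·e_i for i = 1, …, n−1 has order 2^{n−2}; in particular it is isomorphic to (ℤ/2ℤ)^{n−2}. -/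
open Matrix

/-- for even `n ≥ 4`, the subgroup of the critical group of `K_n`
generated by the classes of the vectors `(n/2)·eᵢ` has order `2^{n−2}`, and is
isomorphic to `(ℤ/2ℤ)^{n−2}`. -/
theorem stmt_16 (n : ℕ) (hn : 4 ≤ n) (hn2 : Even n)
    (J : Matrix (Fin (n - 1)) (Fin (n - 1)) ℤ) (hJ : ∀ i j, J i j = 1)
    (M : Matrix (Fin (n - 1)) (Fin (n - 1)) ℤ)
    (hM : M = (n : ℤ) • (1 : Matrix (Fin (n - 1)) (Fin (n - 1)) ℤ) - J)
    (H : AddSubgroup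
      ((Fin (n - 1) → ℤ) ⧸ (LinearMap.range M.mulVecLin).toAddSubgroup))
    (hH : H = AddSubgroup.closure
      {x | ∃ i : Fin (n - 1),
        x = QuotientAddGroup.mk (((n / 2 : ℕ) : ℤ) • Pi.single i 1)}) :
    Nat.card H = 2 ^ (n - 2) ∧
    Nonempty (H ≃+ (Fin (n - 2) → ZMod 2)) := by
  subst hH
  obtain ⟨c, hc⟩ := hn2
  set k : ℤ := ((n / 2 : ℕ) : ℤ) with hk
  have hnc : n / 2 = c := by omega
  have hk2 : (n : ℤ) = 2 * k := by rw [hk, hnc, hc]; push_cast; ring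
  have hkpos : 2 ≤ k := by rw [hk, hnc]; exact_mod_cast (by omega : 2 ≤ c)
  have hk0 : k ≠ 0 := by omega
  -- mulVec formula
  have hMv : ∀ y : Fin (n - 1) → ℤ, M.mulVec y
      = fun i => (n : ℤ) * y i - ∑ j, y j := by
    intro y; funext i
    simp only [hM, Matrix.sub_mulVec, Matrix.smul_mulVec, Matrix.one_mulVec,
      Pi.sub_apply, Pi.smul_apply, smul_eq_mul]
    congr 1
    simp [Matrix.mulVec, dotProduct, hJ]
  have hcard : (Fintype.card (Fin (n - 1)) : ℤ) = (n : ℤ) - 1 := by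
    simp only [Fintype.card_fin]
    push_cast [Nat.cast_sub (by omega : 1 ≤ n)]
    ring
  have hsum1 : ∀ (cc : ℤ), ∑ _j : Fin (n-1), cc = ((n:ℤ) - 1) * cc := by
    intro cc; rw [Finset.sum_const, Finset.card_univ, nsmul_eq_mul, hcard]
  -- membership in the relation subgroup
  set R := (LinearMap.range M.mulVecLin).toAddSubgroup with hR
  have hmemR : ∀ v : Fin (n - 1) → ℤ,
      v ∈ R ↔ ∃ y, M.mulVec y = v := by
    intro v
    simp [hR, Submodule.mem_toAddSubgroup, LinearMap.mem_range, Matrix.mulVecLin_apply]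
  -- n • x is always a relation
  have hnx : ∀ x : Fin (n - 1) → ℤ, (n : ℤ) • x ∈ R := by
    intro x
    rw [hmemR]
    refine ⟨x + (∑ j, x j) • (fun _ => 1), ?_⟩
    rw [hMv]
    funext i
    simp only [Pi.add_apply, Pi.smul_apply, smul_eq_mul, mul_one]
    rw [Finset.sum_add_distrib, hsum1]
    ring
  -- k • 𝟙 is a relation
  have hone : k • (fun _ => (1:ℤ) : Fin (n-1) → ℤ) ∈ R := by
    rw [hmemR]
    refine ⟨k • (fun _ => (1:ℤ)), ?_⟩
    rw [hMv]
    funext i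
    simp only [Pi.smul_apply, smul_eq_mul, mul_one]
    rw [hsum1, hk2]
    ring
  -- the basic hom f
  set f : (Fin (n - 1) → ℤ) →+ ((Fin (n-1) → ℤ) ⧸ R) :=
    AddMonoidHom.mk' (fun x => QuotientAddGroup.mk (k • x))
      (by intro a b; rw [smul_add, QuotientAddGroup.mk_add]) with hf
  -- reduction mod 2
  set r : (Fin (n - 1) → ℤ) →+ (Fin (n - 1) → ZMod 2) :=
    AddMonoidHom.mk' (fun x i => ((x i : ZMod 2)))
      (by intro a b; funext i; push_cast; simp) with hrdef
  set lift : (Fin (n - 1) → ZMod 2) → (Fin (n - 1) → ℤ) :=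
    fun a i => ((a i).val : ℤ) with hlift
  have hrl : ∀ a, r (lift a) = a := by
    intro a; funext i
    simp [hrdef, hlift, ZMod.natCast_val, ZMod.intCast_cast, ZMod.cast_id]
  have hker_le : ∀ x : Fin (n-1) → ℤ, r x = 0 → f x = 0 := by
    intro x hx
    have hdvd : ∀ i, (2:ℤ) ∣ x i := by
      intro i
      have h := congrFun hx i
      simpa [hrdef, ZMod.intCast_zmod_eq_zero_iff_dvd] using h
    set y : Fin (n-1) → ℤ := fun i => x i / 2 with hy
    have hxy : x = (2:ℤ) • y := funext fun i => by
      simp only [hy, Pi.smul_apply, smul_eq_mul]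
      exact (Int.mul_ediv_cancel' (hdvd i)).symm
    have hfx : f x = QuotientAddGroup.mk ((n:ℤ) • y) := by
      show QuotientAddGroup.mk (k • x) = _
      congr 1
      rw [hxy, hk2]
      funext i; simp; ring
    rw [hfx, QuotientAddGroup.eq_zero_iff]
    exact hnx y
  -- the induced hom on (ZMod 2)^(n-1)
  set psi : (Fin (n-1) → ZMod 2) →+ ((Fin (n-1) → ℤ) ⧸ R) :=
    AddMonoidHom.mk' (fun a => f (lift a)) (by
      intro a b
      have h0 : f (lift (a+b) - lift a - lift b) = 0 := by
        apply hker_le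
        rw [map_sub, map_sub, hrl, hrl, hrl]
        abel
      rw [map_sub, map_sub, sub_sub, sub_eq_zero] at h0
      exact h0) with hpsi
  have hpsir : ∀ x, psi (r x) = f x := by
    intro x
    have h0 : f (lift (r x) - x) = 0 := hker_le _ (by rw [map_sub, hrl, sub_self])
    rw [map_sub, sub_eq_zero] at h0
    exact h0
  -- range psi = the closure subgroup
  have hrange : psi.range = AddSubgroup.closure
      {x | ∃ i : Fin (n - 1),
        x = QuotientAddGroup.mk (k • (Pi.single i 1 : Fin (n-1) → ℤ))} := by
    apply le_antisymm
    · rintro _ ⟨a, rfl⟩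
      have hsingle : ∀ i (v : ℤ), Pi.single i v = v • (Pi.single i 1 : Fin (n-1) → ℤ) := by
        intro i v; rw [← Pi.single_smul]; simp
      have hdecomp : psi a = ∑ i, (lift a i) • f (Pi.single i 1) := by
        show f (lift a) = _
        conv_lhs => rw [← Finset.univ_sum_single (lift a)]
        rw [map_sum]
        refine Finset.sum_congr rfl fun i _ => ?_
        rw [hsingle i (lift a i), map_zsmul]
      rw [hdecomp]
      apply AddSubgroup.sum_mem
      intro i _
      apply AddSubgroup.zsmul_mem
      apply AddSubgroup.subset_closure
      exact ⟨i, rfl⟩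
    · rw [AddSubgroup.closure_le]
      rintro _ ⟨i, rfl⟩
      exact ⟨r (Pi.single i 1), by rw [hpsir]; rfl⟩
  -- the projection
  have hL : n - 2 < n - 1 := by omega
  set L : Fin (n-1) := ⟨n-2, hL⟩ with hLdef
  have hle : n - 2 ≤ n - 1 := by omega
  set pr : (Fin (n-1) → ZMod 2) →+ (Fin (n-2) → ZMod 2) :=
    AddMonoidHom.mk' (fun a j => a (Fin.castLE hle j) + a L)
      (by intro a b; funext j; dsimp; ring) with hpr
  have hprsurj : Function.Surjective pr := by
    intro b
    refine ⟨fun i => if h : (i:ℕ) < n - 2 then b ⟨i, h⟩ else 0, ?_⟩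
    funext j
    show (if h : ((Fin.castLE hle j : Fin (n-1)) :ℕ) < n - 2 then b ⟨_, h⟩ else 0)
        + (if h : ((L:ℕ)) < n-2 then b ⟨_,h⟩ else 0) = b j
    have h1 : ((Fin.castLE hle j : Fin (n-1)) : ℕ) < n - 2 := j.2
    rw [dif_pos h1, dif_neg (by simp [hLdef] : ¬ ((L:ℕ) < n-2)), add_zero]
    congr 1
  have hzmod : ∀ z : ZMod 2, z = 0 ∨ z = 1 := by decide
  -- kernels are equal
  have hker : psi.ker = pr.ker := by
    ext a
    simp only [AddMonoidHom.mem_ker]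
    constructor
    · intro ha
      have hmem : k • lift a ∈ R := by
        have ha' : QuotientAddGroup.mk (k • lift a) = (0 : (Fin (n-1) → ℤ) ⧸ R) := ha
        rwa [QuotientAddGroup.eq_zero_iff] at ha'
      by_cases h0 : a = 0
      · rw [h0, map_zero]
      by_cases h1 : a = fun _ => 1
      · rw [h1]
        funext j
        exact (by decide : (1:ZMod 2) + 1 = 0)
      · exfalso
        obtain ⟨i0, hi0⟩ : ∃ i, a i = 0 := by
          by_contra hcon; push_neg at hcon
          exact h1 (funext fun i => (hzmod (a i)).resolve_left (hcon i))
        obtain ⟨j0, hj0⟩ : ∃ j, a j = 1 := by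
          by_contra hcon; push_neg at hcon
          exact h0 (funext fun i => (hzmod (a i)).resolve_right (hcon i))
        rw [hmemR] at hmem
        obtain ⟨y, hy⟩ := hmem
        rw [hMv] at hy
        have hyi : ∀ i, (n:ℤ) * y i - ∑ j, y j = k * (lift a i) := by
          intro i
          have := congrFun hy i
          simpa using this
        have hsumy : (∑ j, y j) = k * (∑ j, lift a j) := by
          have h := Finset.sum_congr rfl (fun i (_ : i ∈ Finset.univ) => hyi i)
          rw [Finset.sum_sub_distrib, hsum1, ← Finset.mul_sum, ← Finset.mul_sum] at h
          linarith [h]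
        have hli0 : lift a i0 = 0 := by
          simp only [hlift]; rw [hi0]; rfl
        have hlj0 : lift a j0 = 1 := by
          simp only [hlift]; rw [hj0]; rfl
        have e1 := hyi i0
        have e2 := hyi j0
        rw [hli0, mul_zero, sub_eq_zero, hsumy] at e1
        rw [hlj0, mul_one, hsumy] at e2
        set s := ∑ j, lift a j with hs
        have c1 : k * (2 * y i0) = k * s := by rw [← mul_assoc, mul_comm k 2, ← hk2, e1]
        have c2 : k * (2 * y j0) = k * (s + 1) := by
          rw [← mul_assoc, mul_comm k 2, ← hk2]
          linarith [e2]
        have d1 := mul_left_cancel₀ hk0 c1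
        have d2 := mul_left_cancel₀ hk0 c2
        omega
    · intro ha
      have hconst : ∀ i, a i = a L := by
        intro i
        by_cases hi : (i:ℕ) < n - 2
        · have h := congrFun ha ⟨(i:ℕ), hi⟩
          have hci : Fin.castLE hle ⟨(i:ℕ), hi⟩ = i := by
            apply Fin.ext; rfl
          have h2 : a (Fin.castLE hle ⟨(i:ℕ), hi⟩) + a L = 0 := h
          have h' : a i + a L = 0 := by rwa [hci] at h2
          have := eq_neg_of_add_eq_zero_left h'
          rwa [CharTwo.neg_eq] at this
        · have hieq : i = L := by
            apply Fin.ext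
            have := i.2
            simp only [hLdef]
            omega
          rw [hieq]
      rcases hzmod (a L) with h|h
      · have haz : a = 0 := funext fun i => by rw [hconst i, h]; rfl
        rw [haz, map_zero]
      · have haz : a = fun _ => 1 := funext fun i => by rw [hconst i, h]
        rw [haz]
        have hl1 : lift (fun _ => (1 : ZMod 2)) = fun _ => (1:ℤ) := by
          funext i; simp only [hlift]; rfl
        show f (lift (fun _ => (1:ZMod 2))) = 0
        rw [hl1]
        show QuotientAddGroup.mk (k • (fun _ => (1:ℤ) : Fin (n-1) → ℤ)) = 0
        rw [QuotientAddGroup.eq_zero_iff]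
        exact hone
  -- assemble
  have e1 := QuotientAddGroup.quotientKerEquivRange psi
  have e2 := AddEquiv.addSubgroupCongr hrange
  have e3 := QuotientAddGroup.quotientKerEquivOfSurjective pr hprsurj
  have e3' : ((Fin (n-1) → ZMod 2) ⧸ psi.ker) ≃+ (Fin (n-2) → ZMod 2) := by
    rw [hker]; exact e3
  have ee := (e2.symm.trans e1.symm).trans e3'
  refine ⟨?_, ⟨ee⟩⟩
  rw [Nat.card_congr ee.toEquiv]
  simp [Nat.card_pi, Nat.card_zmod]
end
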